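/- There exists a nonbinary phylogenetic network N that is tree-based although the bipartite graph B = (U ∪ R, E) associated to N contains a maximal path starting and ending in U; hence the zig-zag-path characterization of binary tree-based networks does not hold for nonbinary networks. -/
import Mathlib


/-- Out-degree of `v` in the digraph with arc relation `arc`. -/
def outdeg {V : Type} [Fintype V] [DecidableEq V] (arc : V → V → Bool) (v : V) : ℕ :=
  (Finset.univ.filter fun w => arc v w = true).card

/-- In-degree of `v` in the digraph with arc relation `arc`. -/
def indeg {V : Type} [Fintype V] [DecidableEq V] (arc : V → V → Bool) (v : V) : ℕ :=
  (Finset.univ.filter fun u => arc u v = true).card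

/-- A rooted nonbinary phylogenetic network on the finite vertex type `V`:
a directed acyclic graph with a single root of indegree 0 and outdegree ≥ 1,
all other vertices being leaves (indegree 1, outdegree 0),
reticulations (indegree ≥ 2, outdegree 1) or tree-vertices (indegree 1, outdegree ≥ 2). -/
structure NBNet (V : Type) [Fintype V] [DecidableEq V] where
  arc : V → V → Bool
  root : V
  acyclic : ∀ v, ¬ Relation.TransGen (fun a b => arc a b = true) v v
  root_indeg : indeg arc root = 0
  root_outdeg : 1 ≤ outdeg arc root
  vertex_types : ∀ v, v ≠ root →
    (indeg arc v = 1 ∧ outdeg arc v = 0) ∨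
    (2 ≤ indeg arc v ∧ outdeg arc v = 1) ∨
    (indeg arc v = 1 ∧ 2 ≤ outdeg arc v)

variable {V : Type} [Fintype V] [DecidableEq V]

/-- A leaf of the network. -/
def NBNet.IsLeaf (N : NBNet V) (v : V) : Prop := outdeg N.arc v = 0

/-- A reticulation of the network: a vertex of indegree at least 2. -/
def NBNet.IsRetic (N : NBNet V) (v : V) : Prop := 2 ≤ indeg N.arc v

/-- A tree-vertex of the network. -/
def NBNet.IsTreeVertex (N : NBNet V) (v : V) : Prop :=
  v ≠ N.root ∧ indeg N.arc v = 1 ∧ 2 ≤ outdeg N.arc v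

/-- An omnian: a non-leaf vertex all of whose children are reticulations. -/
def NBNet.IsOmnian (N : NBNet V) (v : V) : Prop :=
  outdeg N.arc v ≠ 0 ∧ ∀ w, N.arc v w = true → N.IsRetic w

/-- `T` is a rooted spanning tree of `N` (using a subset of the arcs of `N`,
every non-root vertex having exactly one incoming tree arc). -/
def NBNet.IsSpanningTree (N : NBNet V) (T : V → V → Bool) : Prop :=
  (∀ u v, T u v = true → N.arc u v = true) ∧
  (∀ u, T u N.root = false) ∧
  (∀ v, v ≠ N.root → indeg T v = 1)

/-- `N` is tree-based: it has a rooted spanning tree without dummy leaves,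
i.e. every leaf of the spanning tree is a leaf of `N`. -/
def NBNet.TreeBased (N : NBNet V) : Prop :=
  ∃ T, N.IsSpanningTree T ∧ ∀ v, outdeg T v = 0 → outdeg N.arc v = 0

/-- The bipartite graph `B = (U ∪ R, E)` associated to `N` (parts: omnians and
reticulations, edges: omnian-to-reticulation arcs) contains a maximal path that starts
and ends in `U`: a sequence `x 0, r 0, x 1, …, r (k-1), x k` of pairwise distinct
vertices with the `x i` omnians, the `r i` reticulations, each `r i` a child of `x i`
and of `x (i+1)`, such that every reticulation child of `x 0` and of `x k` already lies
on the path (so the path cannot be extended). -/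
def NBNet.HasMaxUUPathB {V : Type} [Fintype V] [DecidableEq V] (N : NBNet V) : Prop :=
  ∃ (k : ℕ) (x : Fin (k+1) → V) (r : Fin k → V),
    Function.Injective x ∧ Function.Injective r ∧
    (∀ i : Fin (k+1), N.IsOmnian (x i)) ∧
    (∀ i : Fin k, N.IsRetic (r i) ∧
      N.arc (x i.castSucc) (r i) = true ∧ N.arc (x i.succ) (r i) = true) ∧
    (∀ w, N.arc (x 0) w = true → N.IsRetic w → ∃ i, r i = w) ∧
    (∀ w, N.arc (x (Fin.last k)) w = true → N.IsRetic w → ∃ i, r i = w)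


/-- Arc relation of the counterexample network on `Fin 12`:
root 0; tree vertices 1,2,3 (omnians) and 4; reticulations 5,6,7; leaves 8,9,10,11. -/
def exArc : Fin 12 → Fin 12 → Bool := fun a b =>
  decide ((a.val, b.val) ∈ [(0,1),(0,2),(0,3),(0,4),(1,5),(1,6),(2,5),(2,6),(2,7),
    (3,5),(3,6),(4,7),(4,11),(5,8),(6,9),(7,10)])

/-- A rank function witnessing acyclicity. -/
def exRank : Fin 12 → ℕ := ![0,1,1,1,1,2,2,2,3,3,3,2]

lemma exArc_rank : ∀ a b, exArc a b = true → exRank a < exRank b := by decide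

lemma exAcyclic : ∀ v, ¬ Relation.TransGen (fun a b => exArc a b = true) v v := by
  intro v h
  have : exRank v < exRank v := by
    have mono : ∀ a b, Relation.TransGen (fun a b => exArc a b = true) a b →
        exRank a < exRank b := by
      intro a b h
      induction h with
      | single h => exact exArc_rank _ _ h
      | tail _ h ih => exact ih.trans (exArc_rank _ _ h)
    exact mono v v h
  exact lt_irrefl _ this

/-- Spanning tree of the counterexample. -/
def exT : Fin 12 → Fin 12 → Bool := fun a b =>
  decide ((a.val, b.val) ∈ [(0,1),(0,2),(0,3),(0,4),(1,5),(2,7),(3,6),(4,11),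
    (5,8),(6,9),(7,10)])

/-- There exists a nonbinary phylogenetic network that is tree-based
although its associated bipartite graph contains a maximal path starting and ending in
`U`; hence the zig-zag-path characterization of binary tree-based networks fails for
nonbinary networks. -/
theorem stmt_19 :
    ∃ (V : Type) (iF : Fintype V) (iD : DecidableEq V) (N : @NBNet V iF iD),
      @NBNet.TreeBased V iF iD N ∧ @NBNet.HasMaxUUPathB V iF iD N := by
  refine ⟨Fin 12, inferInstance, inferInstance,
    ⟨exArc, 0, exAcyclic, by decide, by decide, by decide⟩, ?_, ?_⟩
  · exact ⟨exT, ⟨by decide, by decide, by decide⟩, by decide⟩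
  · exact ⟨2, ![1,2,3], ![5,6], by decide, by decide,
      by unfold NBNet.IsOmnian NBNet.IsRetic; decide,
      by unfold NBNet.IsRetic; decide,
      by unfold NBNet.IsRetic; decide,
      by unfold NBNet.IsRetic; decide⟩
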